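/- Let (E,e) be a matrix factorization of w over S with a connection ∇, and set θ = [∇,e] = ∇ ∘ e − (1_Ω ⊗ e) ∘ ∇. Then for every q ≥ 1, (−1)^q (1_{Ω^{⊗q}} ⊗ e) ∘ θ^q − θ^q ∘ e = −B_{dw} ∘ θ^{q−1} as maps E → Ω^{⊗q} ⊗_S E, where θ^q denotes the q-fold iterate of θ via the extensions 1_{Ω^{⊗j}} ⊗ θ. -/

import Mathlib

set_option maxHeartbeats 1000000

open scoped TensorProduct
open PiTensorProduct

/-- The odd differential `e(x₀, x₁) = (e₁ x₁, e₀ x₀)` of a matrix factorization, as an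
endomorphism of the total module `E₀ × E₁`. -/
noncomputable def mfDiff {S E₀ E₁ : Type*} [CommRing S]
    [AddCommGroup E₀] [AddCommGroup E₁] [Module S E₀] [Module S E₁]
    (e₀ : E₀ →ₗ[S] E₁) (e₁ : E₁ →ₗ[S] E₀) : (E₀ × E₁) →ₗ[S] (E₀ × E₁) :=
  LinearMap.prod (e₁ ∘ₗ LinearMap.snd S E₀ E₁) (e₀ ∘ₗ LinearMap.fst S E₀ E₁)

/-- The pair of connections `(na₀, na₁)` on the graded components of `E`, assembled into a
map on the total module `E₀ × E₁`. -/
noncomputable def connPair {k S E₀ E₁ : Type*} [Field k] [CommRing S] [Algebra k S]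
    [AddCommGroup E₀] [AddCommGroup E₁] [Module S E₀] [Module S E₁]
    [Module k E₀] [Module k E₁] [IsScalarTower k S E₀] [IsScalarTower k S E₁]
    (na₀ : E₀ →ₗ[k] (Ω[S⁄k] ⊗[S] E₀)) (na₁ : E₁ →ₗ[k] (Ω[S⁄k] ⊗[S] E₁)) :
    (E₀ × E₁) → (Ω[S⁄k] ⊗[S] (E₀ × E₁)) :=
  fun x => (LinearMap.lTensor (Ω[S⁄k]) (LinearMap.inl S E₀ E₁)) (na₀ x.1)
    + (LinearMap.lTensor (Ω[S⁄k]) (LinearMap.inr S E₀ E₁)) (na₁ x.2)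

/-! The Leibniz rule and `e ∘ e = w` make `θ = [∇, e]` an odd homotopy for `dw`:
`(1 ⊗ e) ∘ θ + θ ∘ e = dw ⊗ (-)`. Moving `1 ⊗ e` across the `q` factors of `θ^q` therefore
produces, at each position, a sign and a copy of `dw`; the insertion operator `B_{dw}` records
exactly these, because inserting `dw` into `ω ⊗ μ` either inserts it into `ω` or appends it after
`μ`. An induction on `q` assembles the two facts. -/

theorem Fin.insertNth_castSucc_snoc {α : Type*} {n : ℕ} (i : Fin (n + 1)) (x a : α)
    (p : Fin n → α) :
    (insertNth i.castSucc x (snoc p a) : Fin (n + 2) → α) = snoc (insertNth i x p) a := by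
  ext j
  cases j using Fin.succAboveCases i.castSucc with
  | x => simp
  | p j =>
    simp only [insertNth_apply_succAbove]
    cases j using Fin.lastCases <;> simp [succAbove_ne_last_last (castSucc_lt_last i).ne]

theorem neg_one_pow_mul_self {R : Type*} [Monoid R] [HasDistribNeg R] (n : ℕ) :
    (-1 : R) ^ n * (-1) ^ n = 1 := by
  rw [← pow_add, ← two_mul, pow_mul, neg_one_sq, one_pow]

section TensorPowers

open LinearMap (lTensor)

variable {S M E : Type*} [CommRing S] [AddCommGroup M] [Module S M] [AddCommGroup E] [Module S E]

theorem PiTensorProduct.tensor_ext_tprod {N : Type*} [AddCommGroup N] [Module S N] {q : ℕ}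
    {f g : ((⨂[S] (_ : Fin q), M) ⊗[S] E) →ₗ[S] N}
    (h : ∀ (ω : Fin q → M) (x : E), f (tprod S ω ⊗ₜ x) = g (tprod S ω ⊗ₜ x)) :
    f = g :=
  TensorProduct.ext <| PiTensorProduct.ext <| MultilinearMap.ext fun ω => LinearMap.ext (h ω)

theorem PiTensorProduct.tensor_ext_tprod_tmul {N : Type*} [AddCommGroup N] [Module S N] {q : ℕ}
    {f g : ((⨂[S] (_ : Fin q), M) ⊗[S] (M ⊗[S] E)) →ₗ[S] N}
    (h : ∀ (ω : Fin q → M) (μ : M) (x : E),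
      f (tprod S ω ⊗ₜ (μ ⊗ₜ x)) = g (tprod S ω ⊗ₜ (μ ⊗ₜ x))) :
    f = g :=
  TensorProduct.ext <| PiTensorProduct.ext <| MultilinearMap.ext fun ω => TensorProduct.ext' (h ω)

variable (app : ∀ q : ℕ, ((⨂[S] (_ : Fin q), M) ⊗[S] (M ⊗[S] E)) →ₗ[S]
      ((⨂[S] (_ : Fin (q + 1)), M) ⊗[S] E))
  (happ : ∀ (q : ℕ) (ω : Fin q → M) (μ : M) (x : E),
      app q (tprod S ω ⊗ₜ (μ ⊗ₜ x)) = PiTensorProduct.tprod S (Fin.snoc ω μ) ⊗ₜ x)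
  (ν : M)
  (B : ∀ q : ℕ, ((⨂[S] (_ : Fin q), M) ⊗[S] E) →ₗ[S] ((⨂[S] (_ : Fin (q + 1)), M) ⊗[S] E))
  (hB : ∀ (q : ℕ) (ω : Fin q → M) (x : E),
      B q (tprod S ω ⊗ₜ x)
        = ∑ i : Fin (q + 1),
            (-1 : S) ^ (i : ℕ) • (PiTensorProduct.tprod S (i.insertNth ν ω) ⊗ₜ x))

include happ in
theorem lTensor_comp_app_eq_app_comp_lTensor_lTensor (f : E →ₗ[S] E) (q : ℕ) :
    lTensor _ f ∘ₗ app q = app q ∘ₗ lTensor _ (lTensor M f) :=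
  PiTensorProduct.tensor_ext_tprod_tmul fun ω μ x => by simp [happ]

include happ hB in
theorem insertion_comp_app_comp_lTensor (φ : E →ₗ[S] M ⊗[S] E) (q : ℕ) :
    B (q + 1) ∘ₗ app q ∘ₗ lTensor _ φ
      = app (q + 1) ∘ₗ lTensor _ φ ∘ₗ B q
        + (-1 : S) ^ (q + 1) • (app (q + 1) ∘ₗ lTensor _ (TensorProduct.mk S M E ν)
          ∘ₗ app q ∘ₗ lTensor _ φ) := by
  refine PiTensorProduct.tensor_ext_tprod fun ω x => ?_
  simp only [LinearMap.comp_apply, LinearMap.add_apply, LinearMap.smul_apply,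
    LinearMap.lTensor_tmul, hB, map_sum, map_smul]
  induction φ x using TensorProduct.induction_on with
  | zero => simp
  | tmul μ y =>
    simp only [happ, hB, LinearMap.lTensor_tmul, TensorProduct.mk_apply, Fin.sum_univ_castSucc,
      Fin.val_castSucc, Fin.insertNth_castSucc_snoc, Fin.val_last, Fin.insertNth_last']
  | add t₁ t₂ h₁ h₂ =>
    simp only [TensorProduct.tmul_add, map_add, smul_add, Finset.sum_add_distrib, h₁, h₂]
    abel

include happ hB in
theorem lTensor_comp_iterate_eq (e : E →ₗ[S] E) (θ : E →ₗ[S] M ⊗[S] E)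
    (hanti : lTensor M e ∘ₗ θ + θ ∘ₗ e = TensorProduct.mk S M E ν)
    (Θ : ∀ q : ℕ, E →ₗ[S] ((⨂[S] (_ : Fin q), M) ⊗[S] E))
    (hΘ₀ : ∀ x : E, Θ 0 x = PiTensorProduct.tprod S (fun i : Fin 0 => i.elim0) ⊗ₜ x)
    (hΘs : ∀ q : ℕ, Θ (q + 1) = app q ∘ₗ lTensor _ θ ∘ₗ Θ q) (q : ℕ) :
    lTensor _ e ∘ₗ Θ (q + 1) = (-1 : S) ^ (q + 1) • (Θ (q + 1) ∘ₗ e - B q ∘ₗ Θ q) := by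
  have hstep : ∀ m, lTensor _ e ∘ₗ app m ∘ₗ lTensor _ θ
      = app m ∘ₗ lTensor _ (TensorProduct.mk S M E ν)
        - app m ∘ₗ lTensor _ θ ∘ₗ lTensor _ e := by
    intro m
    rw [← LinearMap.comp_assoc, lTensor_comp_app_eq_app_comp_lTensor_lTensor app happ,
      LinearMap.comp_assoc, ← LinearMap.lTensor_comp, eq_sub_of_add_eq hanti,
      LinearMap.lTensor_sub, LinearMap.lTensor_comp, LinearMap.comp_sub]
  induction q with
  | zero =>
    have hΘ₀e : lTensor _ e ∘ₗ Θ 0 = Θ 0 ∘ₗ e := by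
      ext x; simp [hΘ₀]
    have hB₀ : app 0 ∘ₗ lTensor _ (TensorProduct.mk S M E ν) ∘ₗ Θ 0 = B 0 ∘ₗ Θ 0 := by
      ext x
      simp only [LinearMap.comp_apply, hΘ₀, LinearMap.lTensor_tmul, TensorProduct.mk_apply, happ,
        hB]
      rw [← Fin.insertNth_last', Fin.sum_univ_one, Fin.val_zero, pow_zero, one_smul]
      rfl
    calc lTensor _ e ∘ₗ Θ (0 + 1)
        = (lTensor _ e ∘ₗ app 0 ∘ₗ lTensor _ θ) ∘ₗ Θ 0 := by
          rw [hΘs]; rfl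
      _ = app 0 ∘ₗ lTensor _ (TensorProduct.mk S M E ν) ∘ₗ Θ 0
          - app 0 ∘ₗ lTensor _ θ ∘ₗ (lTensor _ e ∘ₗ Θ 0) := by
          rw [hstep]; rfl
      _ = (-1 : S) ^ 1 • (Θ (0 + 1) ∘ₗ e - B 0 ∘ₗ Θ 0) := by
          rw [hΘ₀e, hB₀, hΘs, LinearMap.comp_assoc]
          module
  | succ q ih =>
    have hBΘ := congrArg (· ∘ₗ Θ q) (insertion_comp_app_comp_lTensor app happ ν B hB θ q)
    simp only [LinearMap.add_comp, LinearMap.smul_comp, LinearMap.comp_assoc, ← hΘs] at hBΘ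
    calc lTensor _ e ∘ₗ Θ (q + 1 + 1)
        = (lTensor _ e ∘ₗ app (q + 1) ∘ₗ lTensor _ θ) ∘ₗ Θ (q + 1) := by
          rw [hΘs]; rfl
      _ = app (q + 1) ∘ₗ lTensor _ (TensorProduct.mk S M E ν) ∘ₗ Θ (q + 1)
          - app (q + 1) ∘ₗ lTensor _ θ ∘ₗ (lTensor _ e ∘ₗ Θ (q + 1)) := by
          rw [hstep]; rfl
      _ = (-1 : S) ^ (q + 1 + 1) • (Θ (q + 1 + 1) ∘ₗ e - B (q + 1) ∘ₗ Θ (q + 1)) := by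
          rw [ih, hBΘ, hΘs (q + 1)]
          simp only [LinearMap.comp_smul, LinearMap.comp_sub, pow_succ _ (q + 1),
            LinearMap.comp_assoc]
          match_scalars
          · linear_combination -neg_one_pow_mul_self (R := S) (q + 1)
          · ring
          · ring

end TensorPowers

theorem lTensor_comp_add_comp_eq_mk_D {k S E : Type*} [CommRing k] [CommRing S] [Algebra k S]
    [AddCommGroup E] [Module S E] {w : S} {e : E →ₗ[S] E} (he : e ∘ₗ e = w • LinearMap.id)
    {conn : E → Ω[S⁄k] ⊗[S] E}
    (hconn : ∀ (a : S) (x : E), conn (a • x) = KaehlerDifferential.D k S a ⊗ₜ x + a • conn x)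
    {θ : E →ₗ[S] Ω[S⁄k] ⊗[S] E} (hθ : ∀ x, θ x = conn (e x) - LinearMap.lTensor _ e (conn x)) :
    LinearMap.lTensor _ e ∘ₗ θ + θ ∘ₗ e
      = TensorProduct.mk S _ E (KaehlerDifferential.D k S w) := by
  ext x
  have hee : e (e x) = w • x := by simpa using LinearMap.congr_fun he x
  have hee' : LinearMap.lTensor _ e (LinearMap.lTensor _ e (conn x)) = w • conn x := by
    rw [← LinearMap.lTensor_comp_apply, he, LinearMap.lTensor_smul, LinearMap.lTensor_id]; rfl
  simp only [LinearMap.add_apply, LinearMap.comp_apply, hθ, map_sub, hee, hee', hconn,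
    TensorProduct.mk_apply]
  abel

section MatrixFactorization

variable {S E₀ E₁ : Type*} [CommRing S] [AddCommGroup E₀] [AddCommGroup E₁] [Module S E₀]
  [Module S E₁]

theorem mfDiff_comp_mfDiff {w : S} {e₀ : E₀ →ₗ[S] E₁} {e₁ : E₁ →ₗ[S] E₀}
    (he₀ : e₁ ∘ₗ e₀ = w • LinearMap.id) (he₁ : e₀ ∘ₗ e₁ = w • LinearMap.id) :
    mfDiff e₀ e₁ ∘ₗ mfDiff e₀ e₁ = w • LinearMap.id := by
  ext x
  · simpa [mfDiff] using LinearMap.congr_fun he₀ x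
  · simp [mfDiff]
  · simp [mfDiff]
  · simpa [mfDiff] using LinearMap.congr_fun he₁ x

theorem connPair_smul {k : Type*} [Field k] [Algebra k S] [Module k E₀] [Module k E₁]
    [IsScalarTower k S E₀] [IsScalarTower k S E₁]
    {na₀ : E₀ →ₗ[k] Ω[S⁄k] ⊗[S] E₀} {na₁ : E₁ →ₗ[k] Ω[S⁄k] ⊗[S] E₁}
    (hna₀ : ∀ (a : S) (x : E₀), na₀ (a • x) = KaehlerDifferential.D k S a ⊗ₜ x + a • na₀ x)
    (hna₁ : ∀ (a : S) (x : E₁), na₁ (a • x) = KaehlerDifferential.D k S a ⊗ₜ x + a • na₁ x)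
    (a : S) (x : E₀ × E₁) :
    connPair na₀ na₁ (a • x) = KaehlerDifferential.D k S a ⊗ₜ x + a • connPair na₀ na₁ x := by
  have hx : KaehlerDifferential.D k S a ⊗ₜ[S] x
      = KaehlerDifferential.D k S a ⊗ₜ (x.1, 0) + KaehlerDifferential.D k S a ⊗ₜ (0, x.2) := by
    rw [← TensorProduct.tmul_add, Prod.mk_add_mk, add_zero, zero_add]
  simp only [connPair, Prod.smul_fst, Prod.smul_snd, hna₀, hna₁, map_add, map_smul,
    LinearMap.lTensor_tmul, LinearMap.inl_apply, LinearMap.inr_apply, hx]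
  module

end MatrixFactorization

theorem stmt_12_general {k : Type*} [Field k]
    {S : Type*} [CommRing S] [Algebra k S] (w : S)
    {E₀ E₁ : Type*} [AddCommGroup E₀] [AddCommGroup E₁]
    [Module S E₀] [Module S E₁] [Module k E₀] [Module k E₁]
    [IsScalarTower k S E₀] [IsScalarTower k S E₁]
    (e₀ : E₀ →ₗ[S] E₁) (e₁ : E₁ →ₗ[S] E₀)
    (he₀ : e₁ ∘ₗ e₀ = w • (LinearMap.id : E₀ →ₗ[S] E₀))
    (he₁ : e₀ ∘ₗ e₁ = w • (LinearMap.id : E₁ →ₗ[S] E₁))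
    (na₀ : E₀ →ₗ[k] (Ω[S⁄k] ⊗[S] E₀)) (na₁ : E₁ →ₗ[k] (Ω[S⁄k] ⊗[S] E₁))
    (hna₀ : ∀ (a : S) (x : E₀),
      na₀ (a • x) = (KaehlerDifferential.D k S a) ⊗ₜ[S] x + a • na₀ x)
    (hna₁ : ∀ (a : S) (x : E₁),
      na₁ (a • x) = (KaehlerDifferential.D k S a) ⊗ₜ[S] x + a • na₁ x)
    (θ : (E₀ × E₁) →ₗ[S] (Ω[S⁄k] ⊗[S] (E₀ × E₁)))
    (hθ : ∀ x : E₀ × E₁,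
      θ x = connPair na₀ na₁ (mfDiff e₀ e₁ x)
        - (LinearMap.lTensor (Ω[S⁄k]) (mfDiff e₀ e₁)) (connPair na₀ na₁ x))
    (app : ∀ q : ℕ,
      ((⨂[S] (_ : Fin q), Ω[S⁄k]) ⊗[S] (Ω[S⁄k] ⊗[S] (E₀ × E₁))) →ₗ[S]
        ((⨂[S] (_ : Fin (q + 1)), Ω[S⁄k]) ⊗[S] (E₀ × E₁)))
    (happ : ∀ (q : ℕ) (ω : Fin q → Ω[S⁄k]) (μ : Ω[S⁄k]) (x : E₀ × E₁),
      app q ((tprod S ω) ⊗ₜ[S] (μ ⊗ₜ[S] x)) = (PiTensorProduct.tprod S (Fin.snoc ω μ)) ⊗ₜ[S] x)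
    (Θ : ∀ q : ℕ, (E₀ × E₁) →ₗ[S] ((⨂[S] (_ : Fin q), Ω[S⁄k]) ⊗[S] (E₀ × E₁)))
    (hΘ₀ : ∀ x : E₀ × E₁, Θ 0 x = (PiTensorProduct.tprod S (fun i : Fin 0 => i.elim0)) ⊗ₜ[S] x)
    (hΘs : ∀ q : ℕ,
      Θ (q + 1) = app q ∘ₗ (LinearMap.lTensor (⨂[S] (_ : Fin q), Ω[S⁄k]) θ) ∘ₗ Θ q)
    (Bdw : ∀ q : ℕ,
      ((⨂[S] (_ : Fin q), Ω[S⁄k]) ⊗[S] (E₀ × E₁)) →ₗ[S]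
        ((⨂[S] (_ : Fin (q + 1)), Ω[S⁄k]) ⊗[S] (E₀ × E₁)))
    (hBdw : ∀ (q : ℕ) (ω : Fin q → Ω[S⁄k]) (x : E₀ × E₁),
      Bdw q ((tprod S ω) ⊗ₜ[S] x)
        = ∑ i : Fin (q + 1), ((-1 : S) ^ (i : ℕ)) •
            ((PiTensorProduct.tprod S (i.insertNth (KaehlerDifferential.D k S w) ω)) ⊗ₜ[S] x)) :
    ∀ q : ℕ,
      ((-1 : S) ^ (q + 1)) •
          ((LinearMap.lTensor (⨂[S] (_ : Fin (q + 1)), Ω[S⁄k]) (mfDiff e₀ e₁)) ∘ₗ Θ (q + 1))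
        - Θ (q + 1) ∘ₗ (mfDiff e₀ e₁)
        = -(Bdw q ∘ₗ Θ q) := by
  intro q
  have hanti := lTensor_comp_add_comp_eq_mk_D (mfDiff_comp_mfDiff he₀ he₁)
    (connPair_smul hna₀ hna₁) hθ
  rw [lTensor_comp_iterate_eq app happ _ Bdw hBdw _ θ hanti Θ hΘ₀ hΘs q, smul_smul,
    neg_one_pow_mul_self, one_smul]
  abel

/-- Let `(E, e)` be a matrix factorization of `w` with a connection `∇`,
and `θ = [∇, e]`.  Then for every `q ≥ 1` (stated for `q + 1`),
`(−1)^q (1_{Ω^{⊗q}} ⊗ e) ∘ θ^q − θ^q ∘ e = −B_{dw} ∘ θ^{q−1}`.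
Here `θ^q` (the family `Θ`) is characterized by `Θ 0 x = 1 ⊗ x` and
`Θ (q+1) = app ∘ (1 ⊗ θ) ∘ Θ q`, where `app` is the canonical isomorphism
`Ω^{⊗q} ⊗ (Ω ⊗ E) ≅ Ω^{⊗(q+1)} ⊗ E`, and `B_{dw}` inserts `dw` with alternating signs. -/
theorem stmt_12 {k : Type*} [Field k] [CharZero k]
    {S : Type*} [CommRing S] [Algebra k S] (w : S)
    {E₀ E₁ : Type*} [AddCommGroup E₀] [AddCommGroup E₁]
    [Module S E₀] [Module S E₁] [Module k E₀] [Module k E₁]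
    [IsScalarTower k S E₀] [IsScalarTower k S E₁]
    [Module.Free S E₀] [Module.Finite S E₀] [Module.Free S E₁] [Module.Finite S E₁]
    (e₀ : E₀ →ₗ[S] E₁) (e₁ : E₁ →ₗ[S] E₀)
    (he₀ : e₁ ∘ₗ e₀ = w • (LinearMap.id : E₀ →ₗ[S] E₀))
    (he₁ : e₀ ∘ₗ e₁ = w • (LinearMap.id : E₁ →ₗ[S] E₁))
    (na₀ : E₀ →ₗ[k] (Ω[S⁄k] ⊗[S] E₀)) (na₁ : E₁ →ₗ[k] (Ω[S⁄k] ⊗[S] E₁))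
    (hna₀ : ∀ (a : S) (x : E₀),
      na₀ (a • x) = (KaehlerDifferential.D k S a) ⊗ₜ[S] x + a • na₀ x)
    (hna₁ : ∀ (a : S) (x : E₁),
      na₁ (a • x) = (KaehlerDifferential.D k S a) ⊗ₜ[S] x + a • na₁ x)
    (θ : (E₀ × E₁) →ₗ[S] (Ω[S⁄k] ⊗[S] (E₀ × E₁)))
    (hθ : ∀ x : E₀ × E₁,
      θ x = connPair na₀ na₁ (mfDiff e₀ e₁ x)
        - (LinearMap.lTensor (Ω[S⁄k]) (mfDiff e₀ e₁)) (connPair na₀ na₁ x))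
    (app : ∀ q : ℕ,
      ((⨂[S] (_ : Fin q), Ω[S⁄k]) ⊗[S] (Ω[S⁄k] ⊗[S] (E₀ × E₁))) →ₗ[S]
        ((⨂[S] (_ : Fin (q + 1)), Ω[S⁄k]) ⊗[S] (E₀ × E₁)))
    (happ : ∀ (q : ℕ) (ω : Fin q → Ω[S⁄k]) (μ : Ω[S⁄k]) (x : E₀ × E₁),
      app q ((tprod S ω) ⊗ₜ[S] (μ ⊗ₜ[S] x)) = (PiTensorProduct.tprod S (Fin.snoc ω μ)) ⊗ₜ[S] x)
    (Θ : ∀ q : ℕ, (E₀ × E₁) →ₗ[S] ((⨂[S] (_ : Fin q), Ω[S⁄k]) ⊗[S] (E₀ × E₁)))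
    (hΘ₀ : ∀ x : E₀ × E₁, Θ 0 x = (PiTensorProduct.tprod S (fun i : Fin 0 => i.elim0)) ⊗ₜ[S] x)
    (hΘs : ∀ q : ℕ,
      Θ (q + 1) = app q ∘ₗ (LinearMap.lTensor (⨂[S] (_ : Fin q), Ω[S⁄k]) θ) ∘ₗ Θ q)
    (Bdw : ∀ q : ℕ,
      ((⨂[S] (_ : Fin q), Ω[S⁄k]) ⊗[S] (E₀ × E₁)) →ₗ[S]
        ((⨂[S] (_ : Fin (q + 1)), Ω[S⁄k]) ⊗[S] (E₀ × E₁)))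
    (hBdw : ∀ (q : ℕ) (ω : Fin q → Ω[S⁄k]) (x : E₀ × E₁),
      Bdw q ((tprod S ω) ⊗ₜ[S] x)
        = ∑ i : Fin (q + 1), ((-1 : S) ^ (i : ℕ)) •
            ((PiTensorProduct.tprod S (i.insertNth (KaehlerDifferential.D k S w) ω)) ⊗ₜ[S] x)) :
    ∀ q : ℕ,
      ((-1 : S) ^ (q + 1)) •
          ((LinearMap.lTensor (⨂[S] (_ : Fin (q + 1)), Ω[S⁄k]) (mfDiff e₀ e₁)) ∘ₗ Θ (q + 1))
        - Θ (q + 1) ∘ₗ (mfDiff e₀ e₁)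
        = -(Bdw q ∘ₗ Θ q) :=
  stmt_12_general w e₀ e₁ he₀ he₁ na₀ na₁ hna₀ hna₁ θ hθ app happ Θ hΘ₀ hΘs Bdw hBdw
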